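/- arXiv:2601.09875 — 3 statements merged into one kernel-verified Lean document; each statement's English description precedes it below -/
import Mathlib

section
/- Let (B, ν) be a probability space, H a real or complex Hilbert space, F : B → H a bounded strongly measurable function, and y ∈ H; for ε > 0 set E_ε = {b ∈ B : ‖F(b) − y‖ < ε}. Let (Sₙ) be a sequence of measurable bijections of B with measurable inverses and (Uₙ) a sequence of linear isometries of H. Assume: (i) for every ε > 0, ν(E_ε) > 0 and ν(E_ε ∩ {b : Sₙ⁻¹ b ∈ E_ε}) → ν(E_ε) as n → ∞; (ii) ∫_B ‖Uₙ(F(Sₙ⁻¹ b)) − F(b)‖² dν(b) → 0 as n → ∞. Then ‖Uₙ y − y‖ → 0. -/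
open MeasureTheory Filter

/-- The core convergence argument (isometric case): if `y` is an essential value of the
bounded strongly measurable `F : B → H` in the strong sense (i), and the twisted
differences (ii) tend to `0` in `L²`, then `‖Uₙ y - y‖ → 0`. -/
theorem stmt_2 {𝕜 : Type*} [RCLike 𝕜]
    {B : Type*} [MeasurableSpace B] (ν : Measure B) [IsProbabilityMeasure ν]
    {H : Type*} [NormedAddCommGroup H] [InnerProductSpace 𝕜 H] [CompleteSpace H]
    (F : B → H) (hF : StronglyMeasurable F) (hFbdd : ∃ C : ℝ, ∀ b, ‖F b‖ ≤ C)
    (y : H) (S : ℕ → B ≃ᵐ B) (U : ℕ → H →ₗᵢ[𝕜] H)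
    (hi : ∀ ε : ℝ, 0 < ε →
      0 < ν {b | ‖F b - y‖ < ε} ∧
      Tendsto
        (fun n =>
          (ν ({b | ‖F b - y‖ < ε} ∩ {b | (S n).symm b ∈ {b | ‖F b - y‖ < ε}})).toReal)
        atTop (nhds (ν {b | ‖F b - y‖ < ε}).toReal))
    (hii : Tendsto (fun n => ∫ b, ‖(U n) (F ((S n).symm b)) - F b‖ ^ 2 ∂ν)
      atTop (nhds 0)) :
    Tendsto (fun n => ‖(U n) y - y‖) atTop (nhds 0) := by
  obtain ⟨C, hC⟩ := hFbdd
  rw [Metric.tendsto_nhds]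
  intro ε hε
  have hδ : (0:ℝ) < ε / 4 := by linarith
  set δ := ε / 4 with hδdef
  obtain ⟨hEpos, hEtend⟩ := hi δ hδ
  set E := {b | ‖F b - y‖ < δ} with hE
  have hmfin : ν E ≠ ⊤ := measure_ne_top ν E
  set m := (ν E).toReal with hm
  have hmpos : 0 < m := ENNReal.toReal_pos hEpos.ne' hmfin
  -- eventually the intersection measure is > m/2
  have h1 : ∀ᶠ n in atTop,
      m / 2 < (ν (E ∩ {b | (S n).symm b ∈ E})).toReal :=
    hEtend.eventually (eventually_gt_nhds (by linarith))
  -- eventually the integral is < δ^2 * (m/2)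
  have h2 : ∀ᶠ n in atTop,
      (∫ b, ‖(U n) (F ((S n).symm b)) - F b‖ ^ 2 ∂ν) < δ ^ 2 * (m / 2) :=
    hii.eventually (eventually_lt_nhds (by positivity))
  filter_upwards [h1, h2] with n hn1 hn2
  set g : B → H := fun b => (U n) (F ((S n).symm b)) - F b with hg
  have hgmeas : StronglyMeasurable g :=
    ((U n).continuous.comp_stronglyMeasurable
      (hF.comp_measurable (S n).symm.measurable)).sub hF
  have hgbdd : ∀ b, ‖g b‖ ≤ C + C := by
    intro b
    calc ‖g b‖ ≤ ‖(U n) (F ((S n).symm b))‖ + ‖F b‖ := norm_sub_le _ _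
    _ = ‖F ((S n).symm b)‖ + ‖F b‖ := by rw [(U n).norm_map]
    _ ≤ C + C := add_le_add (hC _) (hC _)
  have hint : Integrable (fun b => ‖g b‖ ^ 2) ν := by
    refine Integrable.mono' (integrable_const ((C + C) ^ 2))
      (hgmeas.norm.measurable.pow_const 2).aestronglyMeasurable
      (ae_of_all _ fun b => ?_)
    rw [Real.norm_eq_abs, abs_of_nonneg (by positivity)]
    exact pow_le_pow_left₀ (norm_nonneg _) (hgbdd b) 2
  -- Chebyshev: the bad set has small measure
  have cheb : δ ^ 2 * (ν {b | δ ^ 2 ≤ ‖g b‖ ^ 2}).toReal ≤ ∫ b, ‖g b‖ ^ 2 ∂ν :=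
    mul_meas_ge_le_integral_of_nonneg (ae_of_all _ fun b => by positivity) hint _
  have hbad : (ν {b | δ ^ 2 ≤ ‖g b‖ ^ 2}).toReal < m / 2 := by
    have hδ2 : (0:ℝ) < δ ^ 2 := by positivity
    nlinarith [cheb, hn2]
  -- find a good point
  have hsub : ¬ (E ∩ {b | (S n).symm b ∈ E} ⊆ {b | δ ^ 2 ≤ ‖g b‖ ^ 2}) := by
    intro hs
    have := ENNReal.toReal_mono (measure_ne_top ν _) (measure_mono hs)
    linarith
  obtain ⟨b, hbA, hbbad⟩ := Set.not_subset.1 hsub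
  have hb1 : ‖F b - y‖ < δ := hbA.1
  have hb2 : ‖F ((S n).symm b) - y‖ < δ := hbA.2
  have hb3 : ‖g b‖ < δ := by
    by_contra h
    push_neg at h
    exact hbbad (pow_le_pow_left₀ hδ.le h 2)
  have key : ‖(U n) y - y‖ < ε := by
    calc ‖(U n) y - y‖
        ≤ ‖(U n) y - (U n) (F ((S n).symm b))‖ + ‖g b‖ + ‖F b - y‖ := by
          have : (U n) y - y = ((U n) y - (U n) (F ((S n).symm b))) + g b + (F b - y) := by
            simp [hg]
          rw [this]
          exact norm_add₃_le
    _ = ‖F ((S n).symm b) - y‖ + ‖g b‖ + ‖F b - y‖ := by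
          rw [← (U n).map_sub, (U n).norm_map, norm_sub_rev]
    _ < δ + δ + δ := by linarith
    _ < ε := by rw [hδdef]; linarith
  simpa [Real.dist_eq, abs_of_nonneg (norm_nonneg _)] using key
end

section
/- Let (B, ν) be a probability space, H a real or complex Hilbert space, F : B → H a bounded strongly measurable function, y ∈ H, and ε > 0; set E = {b ∈ B : ‖F(b) − y‖ < ε}. Let S : B → B be a measurable bijection with measurable inverse, let U : H → H be a bounded linear operator, and let δ ≥ 0 be such that ‖U(F(b) − y)‖² ≤ ‖F(b) − y‖² + δ for every b ∈ B. Then ν(E ∩ {b : S⁻¹ b ∈ E}) · ‖U y − y‖² ≤ 3 ∫_B ‖U(F(S⁻¹ b)) − F(b)‖² dν(b) + 3 ε² · ν(E ∩ {b : S⁻¹ b ∈ E}) + 3 (ε² + δ) · ν(E ∩ {b : S⁻¹ b ∈ E}). -/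
/-!
On `E ∩ S(E)` write `U y - y = (U (F (S⁻¹ b)) - F b) + (F b - y) - U (F (S⁻¹ b) - y)`; the three
terms have squared norms at most `‖U (F (S⁻¹ b)) - F b‖²`, `ε²` and `ε² + δ`, so
`(a + b + c)² ≤ 3 (a² + b² + c²)` bounds `‖U y - y‖²` pointwise there. Integrating over `E ∩ S(E)`
and enlarging the integral of the nonnegative first term to all of `B` gives the estimate.
-/

open MeasureTheory

theorem norm_add₃_sq_le {E : Type*} [SeminormedAddCommGroup E] (a b c : E) :
    ‖a + b + c‖ ^ 2 ≤ 3 * ‖a‖ ^ 2 + 3 * ‖b‖ ^ 2 + 3 * ‖c‖ ^ 2 := by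
  have := norm_add₃_le (a := a) (b := b) (c := c)
  nlinarith [norm_nonneg (a + b + c), sq_nonneg (‖a‖ - ‖b‖), sq_nonneg (‖b‖ - ‖c‖),
    sq_nonneg (‖a‖ - ‖c‖)]

theorem norm_map_sub_self_sq_le {E 𝓕 : Type*} [SeminormedAddCommGroup E] [FunLike 𝓕 E E]
    [AddMonoidHomClass 𝓕 E E] (U : 𝓕) (x x' y : E) :
    ‖U y - y‖ ^ 2 ≤ 3 * ‖U x' - x‖ ^ 2 + 3 * ‖x - y‖ ^ 2 + 3 * ‖U (x' - y)‖ ^ 2 := by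
  have hdecomp : U y - y = (U x' - x) + (x - y) + -U (x' - y) := by
    rw [map_sub]; abel
  simpa only [hdecomp, norm_neg] using norm_add₃_sq_le (U x' - x) (x - y) (-U (x' - y))

theorem measureReal_mul_le_integral_add_mul {α : Type*} [MeasurableSpace α] (μ : Measure α)
    [IsFiniteMeasure μ] {A : Set α} (hA : MeasurableSet A) {g : α → ℝ} (hg : Integrable g μ)
    (hg0 : 0 ≤ᵐ[μ] g) {c k : ℝ} (hle : ∀ a ∈ A, c ≤ g a + k) :
    μ.real A * c ≤ ∫ a, g a ∂μ + k * μ.real A :=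
  calc μ.real A * c = ∫ _ in A, c ∂μ := by rw [setIntegral_const, smul_eq_mul, mul_comm]
    _ ≤ ∫ a in A, (g a + k) ∂μ :=
      setIntegral_mono_on (integrableOn_const (measure_ne_top μ A))
        (hg.integrableOn.add (integrableOn_const (measure_ne_top μ A))) hA hle
    _ = ∫ a in A, g a ∂μ + k * μ.real A := by
      rw [integral_add hg.integrableOn (integrableOn_const (measure_ne_top μ A)),
        setIntegral_const, smul_eq_mul, mul_comm]
    _ ≤ ∫ a, g a ∂μ + k * μ.real A := by
      linarith [setIntegral_le_integral (s := A) hg hg0]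

theorem integrable_norm_sq_of_bounded {α E : Type*} [MeasurableSpace α] [NormedAddCommGroup E]
    (μ : Measure α) [IsFiniteMeasure μ] {f : α → E} (hf : AEStronglyMeasurable f μ) {C : ℝ}
    (hC : ∀ a, ‖f a‖ ≤ C) : Integrable (fun a ↦ ‖f a‖ ^ 2) μ :=
  ((memLp_top_of_bound hf C (ae_of_all _ hC)).mono_exponent le_top).integrable_norm_pow'

theorem norm_map_comp_sub_le {α E 𝕜 : Type*} [NontriviallyNormedField 𝕜]
    [SeminormedAddCommGroup E] [NormedSpace 𝕜 E] (U : E →L[𝕜] E) {F : α → E} {C : ℝ} (hC : ∀ a, ‖F a‖ ≤ C) (T : α → α)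
    (a : α) : ‖U (F (T a)) - F a‖ ≤ ‖U‖ * C + C :=
  calc ‖U (F (T a)) - F a‖ ≤ ‖U (F (T a))‖ + ‖F a‖ := norm_sub_le _ _
    _ ≤ ‖U‖ * C + C := add_le_add ((U.le_opNorm _).trans (by gcongr; exact hC _)) (hC a)

theorem stmt_3_general {𝕜 : Type*} [RCLike 𝕜]
    {B : Type*} [MeasurableSpace B] (ν : Measure B) [IsProbabilityMeasure ν]
    {H : Type*} [NormedAddCommGroup H] [InnerProductSpace 𝕜 H]
    (F : B → H) (hF : StronglyMeasurable F) (hFbdd : ∃ C : ℝ, ∀ b, ‖F b‖ ≤ C)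
    (y : H) (ε : ℝ)
    (S : B ≃ᵐ B) (U : H →L[𝕜] H) (δ : ℝ)
    (hU : ∀ b, ‖U (F b - y)‖ ^ 2 ≤ ‖F b - y‖ ^ 2 + δ) :
    (ν ({b | ‖F b - y‖ < ε} ∩ {b | S.symm b ∈ {b | ‖F b - y‖ < ε}})).toReal * ‖U y - y‖ ^ 2 ≤
      3 * ∫ b, ‖U (F (S.symm b)) - F b‖ ^ 2 ∂ν +
        3 * ε ^ 2 * (ν ({b | ‖F b - y‖ < ε} ∩ {b | S.symm b ∈ {b | ‖F b - y‖ < ε}})).toReal +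
        3 * (ε ^ 2 + δ) *
          (ν ({b | ‖F b - y‖ < ε} ∩ {b | S.symm b ∈ {b | ‖F b - y‖ < ε}})).toReal := by
  obtain ⟨C, hC⟩ := hFbdd
  set E : Set B := {b | ‖F b - y‖ < ε}
  have hE : MeasurableSet E :=
    measurableSet_lt (hF.sub stronglyMeasurable_const).norm.measurable measurable_const
  have hint : Integrable (fun b ↦ ‖U (F (S.symm b)) - F b‖ ^ 2) ν :=
    integrable_norm_sq_of_bounded ν
      ((U.continuous.comp_stronglyMeasurable (hF.comp_measurable S.symm.measurable)).sub hF
        ).aestronglyMeasurable (norm_map_comp_sub_le U hC S.symm)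
  have hpointwise : ∀ b ∈ E ∩ {b | S.symm b ∈ E},
      ‖U y - y‖ ^ 2 ≤ 3 * ‖U (F (S.symm b)) - F b‖ ^ 2 + (3 * ε ^ 2 + 3 * (ε ^ 2 + δ)) := by
    rintro b ⟨hb : ‖F b - y‖ < ε, hSb : ‖F (S.symm b) - y‖ < ε⟩
    have hsplit := norm_map_sub_self_sq_le U (F b) (F (S.symm b)) y
    have hUSb := hU (S.symm b)
    nlinarith [norm_nonneg (F b - y), norm_nonneg (F (S.symm b) - y)]
  have hbound := measureReal_mul_le_integral_add_mul ν (A := E ∩ {b | S.symm b ∈ E})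
    (hE.inter (S.symm.measurable hE)) (hint.const_mul 3) (ae_of_all _ fun b ↦ by positivity)
    hpointwise
  rw [integral_const_mul] at hbound
  simp only [Measure.real] at hbound
  linarith

/-- The three-term estimate (almost-isometric case): for a bounded strongly measurable
`F : B → H`, `E = {b | ‖F b - y‖ < ε}`, a measurable bijection `S` of `B` and a bounded
operator `U` on `H` satisfying `‖U(F b - y)‖² ≤ ‖F b - y‖² + δ` for all `b`,
`ν(E ∩ S⁻¹E) ‖Uy - y‖² ≤ 3 ∫ ‖U(F(S⁻¹b)) - F(b)‖² dν + 3 ε² ν(E ∩ S⁻¹E)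
  + 3 (ε² + δ) ν(E ∩ S⁻¹E)`. -/
theorem stmt_3 {𝕜 : Type*} [RCLike 𝕜]
    {B : Type*} [MeasurableSpace B] (ν : Measure B) [IsProbabilityMeasure ν]
    {H : Type*} [NormedAddCommGroup H] [InnerProductSpace 𝕜 H] [CompleteSpace H]
    (F : B → H) (hF : StronglyMeasurable F) (hFbdd : ∃ C : ℝ, ∀ b, ‖F b‖ ≤ C)
    (y : H) (ε : ℝ) (hε : 0 < ε)
    (S : B ≃ᵐ B) (U : H →L[𝕜] H) (δ : ℝ) (hδ : 0 ≤ δ)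
    (hU : ∀ b, ‖U (F b - y)‖ ^ 2 ≤ ‖F b - y‖ ^ 2 + δ) :
    (ν ({b | ‖F b - y‖ < ε} ∩ {b | S.symm b ∈ {b | ‖F b - y‖ < ε}})).toReal * ‖U y - y‖ ^ 2 ≤
      3 * ∫ b, ‖U (F (S.symm b)) - F b‖ ^ 2 ∂ν +
        3 * ε ^ 2 * (ν ({b | ‖F b - y‖ < ε} ∩ {b | S.symm b ∈ {b | ‖F b - y‖ < ε}})).toReal +
        3 * (ε ^ 2 + δ) *
          (ν ({b | ‖F b - y‖ < ε} ∩ {b | S.symm b ∈ {b | ‖F b - y‖ < ε}})).toReal :=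
  stmt_3_general ν F hF hFbdd y ε S U δ hU
end

section
/- Let (B, ν) and (X, μ) be probability spaces, where X is a second-countable metrizable topological space equipped with its Borel σ-algebra. Let f : B × X → ℝ be a bounded measurable function. Assume that for every bounded measurable y : X → ℝ there exists a constant c ∈ ℝ such that ∫_X y(x) f(b, x) dμ(x) = c for ν-almost every b ∈ B. Then there exists a bounded measurable function f₀ : X → ℝ such that f(b, x) = f₀(x) for (ν × μ)-almost every (b, x) ∈ B × X. -/
/-!
Put `f₀ x = ∫ f (b, x) dν(b)`. Testing against indicators, each slice integral
`∫_s f (b, ·) dμ` is a.e. constant in `b`, and by Fubini that constant is `∫_s f₀ dμ`.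
As the σ-algebra of `X` is generated by a countable π-system, one ν-null set of `b` can be
discarded, after which the set integrals of `f (b, ·)` and `f₀` agree on the π-system and on
`X`, hence (Dynkin) on every measurable set, so `f (b, ·) = f₀` μ-a.e.
-/

open MeasureTheory

theorem Set.Countable.generatePiSystem {α : Type*} {S : Set (Set α)} (hS : S.Countable) :
    (generatePiSystem S).Countable := by
  refine ((Set.countable_ofPred_finite_subset hS).image Set.sInter).mono fun s hs => ?_
  induction hs with
  | base hs =>
    exact ⟨{_}, ⟨Set.finite_singleton _, Set.singleton_subset_iff.2 hs⟩,
      Set.sInter_singleton _⟩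
  | inter _ _ _ ihs iht =>
    obtain ⟨F, ⟨hF, hFS⟩, rfl⟩ := ihs
    obtain ⟨G, ⟨hG, hGS⟩, rfl⟩ := iht
    exact ⟨F ∪ G, ⟨hF.union hG, Set.union_subset hFS hGS⟩, Set.sInter_union F G⟩

theorem MeasurableSpace.exists_countable_isPiSystem_generateFrom {α : Type*}
    [m : MeasurableSpace α] [MeasurableSpace.CountablyGenerated α] :
    ∃ S : Set (Set α), S.Countable ∧ IsPiSystem S ∧ m = generateFrom S :=
  ⟨_, countable_countableGeneratingSet.generatePiSystem, isPiSystem_generatePiSystem _, by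
    rw [generateFrom_generatePiSystem_eq, generateFrom_countableGeneratingSet]⟩

section

variable {α E : Type*} [NormedAddCommGroup E] [NormedSpace ℝ E] [CompleteSpace E]

theorem ae_eq_of_forall_setIntegral_eq_of_isPiSystem {m : MeasurableSpace α} {μ : Measure α}
    {S : Set (Set α)} (hgen : m = MeasurableSpace.generateFrom S) (hpi : IsPiSystem S)
    {f g : α → E} (hf : Integrable f μ) (hg : Integrable g μ)
    (huniv : ∫ x, f x ∂μ = ∫ x, g x ∂μ)
    (hS : ∀ s ∈ S, ∫ x in s, f x ∂μ = ∫ x in s, g x ∂μ) :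
    f =ᵐ[μ] g := by
  have hall : ∀ t, MeasurableSet t → ∫ x in t, f x ∂μ = ∫ x in t, g x ∂μ := by
    refine MeasurableSpace.induction_on_inter hgen hpi (by simp) hS ?_ ?_
    · intro t ht heq
      rw [setIntegral_compl ht hf, setIntegral_compl ht hg, huniv, heq]
    · intro s hdisj hs heq
      rw [integral_iUnion hs hdisj hf.integrableOn, integral_iUnion hs hdisj hg.integrableOn]
      exact tsum_congr heq
  exact hf.ae_eq_of_forall_setIntegral_eq f g hg fun t ht _ => hall t ht

theorem ae_eq_integral_of_ae_eq_const {β : Type*} [MeasurableSpace β] {ν : Measure β}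
    [IsProbabilityMeasure ν] {g : β → E} {c : E} (h : ∀ᵐ b ∂ν, g b = c) :
    ∀ᵐ b ∂ν, g b = ∫ b, g b ∂ν := by
  rwa [integral_congr_ae h, integral_const, probReal_univ, one_smul]

variable {B X : Type*} [MeasurableSpace B] [MeasurableSpace X] {ν : Measure B} {μ : Measure X}
  [IsProbabilityMeasure ν] [SFinite μ]

theorem ae_setIntegral_eq_setIntegral_integral_of_ae_eq_const {f : B × X → E}
    (hf : Integrable f (ν.prod μ)) (s : Set X) {c : E}
    (hc : ∀ᵐ b ∂ν, ∫ x in s, f (b, x) ∂μ = c) :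
    ∀ᵐ b ∂ν, ∫ x in s, f (b, x) ∂μ = ∫ x in s, ∫ b, f (b, x) ∂ν ∂μ := by
  have hfs : Integrable f (ν.prod (μ.restrict s)) := by
    have := hf.restrict (s := Set.univ ×ˢ s)
    rwa [← Measure.prod_restrict, Measure.restrict_univ] at this
  rw [← integral_integral_swap (f := fun b x => f (b, x)) hfs]
  exact ae_eq_integral_of_ae_eq_const hc

theorem ae_eq_integral_fst_of_forall_ae_setIntegral_eq_const
    [MeasurableSpace.CountablyGenerated X] {f : B × X → E} (hfm : StronglyMeasurable f)
    (hf : Integrable f (ν.prod μ))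
    (hconst : ∀ s, MeasurableSet s → ∃ c, ∀ᵐ b ∂ν, ∫ x in s, f (b, x) ∂μ = c) :
    ∀ᵐ p ∂(ν.prod μ), f p = ∫ b, f (b, p.2) ∂ν := by
  set f₀ : X → E := fun x => ∫ b, f (b, x) ∂ν
  have hsetIntegral (s : Set X) (hs : MeasurableSet s) :
      ∀ᵐ b ∂ν, ∫ x in s, f (b, x) ∂μ = ∫ x in s, f₀ x ∂μ :=
    (hconst s hs).elim fun _ ↦ ae_setIntegral_eq_setIntegral_integral_of_ae_eq_const hf s
  obtain ⟨S, hScount, hSpi, hSgen⟩ :=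
    MeasurableSpace.exists_countable_isPiSystem_generateFrom (α := X)
  have hslice : ∀ᵐ b ∂ν, ∀ᵐ x ∂μ, f (b, x) = f₀ x := by
    filter_upwards [hf.prod_right_ae, hsetIntegral _ .univ,
      (ae_ball_iff hScount).2 fun s hs => hsetIntegral s (hSgen ▸ .basic s hs)]
      with b hfb huniv hS
    rw [Measure.restrict_univ] at huniv
    exact ae_eq_of_forall_setIntegral_eq_of_isPiSystem hSgen hSpi hfb hf.integral_prod_right
      huniv hS
  exact (Measure.ae_prod_iff_ae_ae (p := fun p => f p = f₀ p.2)
    (hfm.measurableSet_eq_fun (hfm.integral_prod_left'.comp_measurable measurable_snd))).2 hslice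

end

theorem stmt_6_general {B : Type*} [MeasurableSpace B] (ν : Measure B) [IsProbabilityMeasure ν]
    {X : Type*} [TopologicalSpace X] [SecondCountableTopology X]
    [MeasurableSpace X] [BorelSpace X]
    (μ : Measure X) [IsProbabilityMeasure μ]
    (f : B × X → ℝ) (hf : Measurable f) (hfbdd : ∃ C : ℝ, ∀ p, |f p| ≤ C)
    (hconst : ∀ y : X → ℝ, Measurable y → (∃ C : ℝ, ∀ x, |y x| ≤ C) →
      ∃ c : ℝ, ∀ᵐ b ∂ν, ∫ x, y x * f (b, x) ∂μ = c) :
    ∃ f₀ : X → ℝ, Measurable f₀ ∧ (∃ C : ℝ, ∀ x, |f₀ x| ≤ C) ∧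
      ∀ᵐ p ∂(ν.prod μ), f p = f₀ p.2 := by
  obtain ⟨C, hC⟩ := hfbdd
  have hsetIntegral (s : Set X) (hs : MeasurableSet s) :
      ∃ c, ∀ᵐ b ∂ν, ∫ x in s, f (b, x) ∂μ = c := by
    obtain ⟨c, hc⟩ := hconst (s.indicator 1) (measurable_one.indicator hs)
      ⟨1, fun x => by by_cases hx : x ∈ s <;> simp [hx]⟩
    refine ⟨c, hc.mono fun b hb => ?_⟩
    rw [← hb, ← integral_indicator hs]
    congr 1 with x
    by_cases hx : x ∈ s <;> simp [hx]
  have hfint : Integrable f (ν.prod μ) :=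
    .of_bound hf.aestronglyMeasurable C (.of_forall hC)
  refine ⟨fun x => ∫ b, f (b, x) ∂ν, hf.stronglyMeasurable.integral_prod_left'.measurable,
    ⟨C, fun x => ?_⟩, ae_eq_integral_fst_of_forall_ae_setIntegral_eq_const hf.stronglyMeasurable
      hfint hsetIntegral⟩
  simpa using norm_integral_le_of_norm_le_const (μ := ν) (f := fun b => f (b, x))
    (.of_forall fun b => hC (b, x))

/-- Commutative instance of Proposition 2.6: a bounded measurable function
`f : B × X → ℝ` all of whose slice pairings against bounded measurable test functions
on `X` are essentially constant in `b` is almost everywhere independent of `b`. -/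
theorem stmt_6 {B : Type*} [MeasurableSpace B] (ν : Measure B) [IsProbabilityMeasure ν]
    {X : Type*} [TopologicalSpace X] [SecondCountableTopology X]
    [TopologicalSpace.MetrizableSpace X] [MeasurableSpace X] [BorelSpace X]
    (μ : Measure X) [IsProbabilityMeasure μ]
    (f : B × X → ℝ) (hf : Measurable f) (hfbdd : ∃ C : ℝ, ∀ p, |f p| ≤ C)
    (hconst : ∀ y : X → ℝ, Measurable y → (∃ C : ℝ, ∀ x, |y x| ≤ C) →
      ∃ c : ℝ, ∀ᵐ b ∂ν, ∫ x, y x * f (b, x) ∂μ = c) :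
    ∃ f₀ : X → ℝ, Measurable f₀ ∧ (∃ C : ℝ, ∀ x, |f₀ x| ≤ C) ∧
      ∀ᵐ p ∂(ν.prod μ), f p = f₀ p.2 :=
  stmt_6_general ν μ f hf hfbdd hconst
end
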